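/- arXiv:2002.03878 — 6 statements merged into one kernel-verified Lean document; each statement's English description precedes it below -/
import Mathlib

section
/- Let V be a real vector space and let (x,t) ∈ V^(I∪_i J) × (0,∞)^(I∪_i J) with ∑ t = 1, ∑ t_k x_k = 0. Define the composition ((x/J,t/J), (x|J,t|J)) ↦ (x/J +_i (t/J)·(x|J), (t/J)·_i(t|J)) where (t·_i u)_j = t_j if j ∉ J and t_i u_j if j ∈ J, and (x +_i t y)_j = x_j if j ∉ J and x_i + t_i y_j if j ∈ J. Then composing the decomposition (x,t) ↦ ((x/J,t/J),(x|J,t|J)) with this composition map recovers (x,t). Conversely, decomposing a composition recovers the original pair of points. Hence the composition map R_V(I) × R_V(J) → R_V(I∪_i J) is a bijection. -/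
/-- The space `R_V(K)` of configurations: points `x : K → V`, weights `t : K → ℝ`,
with `t` positive, weights summing to `1`, and weighted barycentre `0`. -/
def RVset (V : Type*) [AddCommGroup V] [Module ℝ V] (K : Type*) [Fintype K] :
    Set ((K → V) × (K → ℝ)) :=
  {p | (∀ k, 0 < p.2 k) ∧ (∑ k, p.2 k = 1) ∧ (∑ k, p.2 k • p.1 k = 0)}

/-- The operadic composition map `((x,t),(y,u)) ↦ (x +_i t y, t ·_i u)`, defined on raw
data, landing in data indexed by `I ∪_i J = (I ∖ {i}) ⊕ J`. -/
def compFn {V : Type*} [AddCommGroup V] [Module ℝ V]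
    {I J : Type*} [DecidableEq I] (i : I)
    (p : ((I → V) × (I → ℝ)) × ((J → V) × (J → ℝ))) :
    (({i' : I // i' ≠ i} ⊕ J) → V) × (({i' : I // i' ≠ i} ⊕ J) → ℝ) :=
  (Sum.elim (fun i' => p.1.1 i'.1) (fun j => p.1.1 i + p.1.2 i • p.2.1 j),
   Sum.elim (fun i' => p.1.2 i'.1) (fun j => p.1.2 i * p.2.2 j))

/-- The decomposition map `(x,t) ↦ ((x/J, t/J), (x|J, t|J))` of the barycentre
(co)operad, defined on raw data. -/
noncomputable def decompFn {V : Type*} [AddCommGroup V] [Module ℝ V]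
    {I J : Type*} [DecidableEq I] [Fintype J] (i : I)
    (q : (({i' : I // i' ≠ i} ⊕ J) → V) × (({i' : I // i' ≠ i} ⊕ J) → ℝ)) :
    ((I → V) × (I → ℝ)) × ((J → V) × (J → ℝ)) :=
  ((fun i' => if h : i' = i then
        (∑ j, q.2 (Sum.inr j))⁻¹ • ∑ j, q.2 (Sum.inr j) • q.1 (Sum.inr j)
      else q.1 (Sum.inl ⟨i', h⟩),
    fun i' => if h : i' = i then ∑ j, q.2 (Sum.inr j) else q.2 (Sum.inl ⟨i', h⟩)),
   (fun j => (∑ j', q.2 (Sum.inr j'))⁻¹ •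
      (q.1 (Sum.inr j) -
        (∑ j', q.2 (Sum.inr j'))⁻¹ • ∑ j', q.2 (Sum.inr j') • q.1 (Sum.inr j')),
    fun j => q.2 (Sum.inr j) / ∑ j', q.2 (Sum.inr j')))

/-!
Composition glues the configuration `(y, u)` into the slot `i` of `(x, t)`, rescaled by
`t i` and centred at `x i`. Since `∑ u = 1` and `∑ u • y = 0`, the inserted block has total
weight `t i` and barycentre `x i`, which is exactly what decomposition reads off as the `i`-th
point; subtracting that barycentre and dividing by `t i` then gives back `(y, u)`. In the other
direction, decomposition splits off a block of positive total weight, replaces it by its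
barycentre, and records the block in barycentric coordinates, which composition undoes.
-/

open Finset

lemma sum_smul_sub_barycentre_eq_zero {V ι : Type*} [AddCommGroup V] [Module ℝ V] [Fintype ι]
    (w : ι → ℝ) (y : ι → V) (hw : ∑ j, w j ≠ 0) :
    ∑ j, w j • (y j - (∑ j, w j)⁻¹ • ∑ j, w j • y j) = 0 := by
  simp only [smul_sub, sum_sub_distrib, ← sum_smul, smul_inv_smul₀ hw, sub_self]

section

variable {V : Type*} [AddCommGroup V] [Module ℝ V] {I J : Type*} [DecidableEq I] {i : I}

lemma sum_weight_compFn [Fintype J] (p : ((I → V) × (I → ℝ)) × ((J → V) × (J → ℝ))) :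
    ∑ j, (compFn i p).2 (.inr j) = p.1.2 i * ∑ j, p.2.2 j := by
  simp only [compFn, Sum.elim_inr, mul_sum]

lemma sum_moment_compFn [Fintype J] (p : ((I → V) × (I → ℝ)) × ((J → V) × (J → ℝ))) :
    ∑ j, (compFn i p).2 (.inr j) • (compFn i p).1 (.inr j) =
      (p.1.2 i * ∑ j, p.2.2 j) • p.1.1 i + (p.1.2 i * p.1.2 i) • ∑ j, p.2.2 j • p.2.1 j := by
  simp only [compFn, Sum.elim_inr, smul_add, sum_add_distrib, ← sum_smul, mul_sum, smul_sum,
    smul_smul]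
  congr 1
  exact sum_congr rfl fun j _ => by rw [mul_right_comm]

lemma decompFn_weight_self [Fintype J]
    (q : (({i' : I // i' ≠ i} ⊕ J) → V) × (({i' : I // i' ≠ i} ⊕ J) → ℝ)) :
    (decompFn i q).1.2 i = ∑ j, q.2 (.inr j) := by
  simp [decompFn]

lemma decompFn_moment_self [Fintype J]
    (q : (({i' : I // i' ≠ i} ⊕ J) → V) × (({i' : I // i' ≠ i} ⊕ J) → ℝ))
    (hq : ∑ j, q.2 (.inr j) ≠ 0) :
    (decompFn i q).1.2 i • (decompFn i q).1.1 i = ∑ j, q.2 (.inr j) • q.1 (.inr j) := by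
  simp [decompFn, smul_inv_smul₀ hq]

lemma decompFn_of_ne [Fintype J]
    (q : (({i' : I // i' ≠ i} ⊕ J) → V) × (({i' : I // i' ≠ i} ⊕ J) → ℝ))
    (i' : {i' : I // i' ≠ i}) :
    (decompFn i q).1.1 i' = q.1 (.inl i') ∧ (decompFn i q).1.2 i' = q.2 (.inl i') := by
  simp [decompFn, i'.2]

lemma compFn_decompFn [Fintype J]
    (q : (({i' : I // i' ≠ i} ⊕ J) → V) × (({i' : I // i' ≠ i} ⊕ J) → ℝ))
    (hq : ∑ j, q.2 (.inr j) ≠ 0) :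
    compFn i (decompFn i q) = q := by
  refine Prod.ext (funext fun k => ?_) (funext fun k => ?_)
  · rcases k with i' | j
    · exact (decompFn_of_ne q i').1
    · simp [compFn, decompFn, smul_inv_smul₀ hq]
  · rcases k with i' | j
    · exact (decompFn_of_ne q i').2
    · simp only [compFn, decompFn, Sum.elim_inr, dite_true]
      exact mul_div_cancel₀ _ hq

lemma decompFn_compFn [Fintype J] (x : I → V) (t : I → ℝ) (y : J → V) (u : J → ℝ)
    (ht : t i ≠ 0) (hu : ∑ j, u j = 1) (hy : ∑ j, u j • y j = 0) :
    decompFn i (compFn i ((x, t), (y, u))) = ((x, t), (y, u)) := by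
  have hweight := sum_weight_compFn (i := i) ((x, t), (y, u))
  have hmoment := sum_moment_compFn (i := i) ((x, t), (y, u))
  simp only [hu, hy, mul_one, smul_zero, add_zero] at hweight hmoment
  refine Prod.ext (Prod.ext (funext fun i' => ?_) (funext fun i' => ?_))
    (Prod.ext (funext fun j => ?_) (funext fun j => ?_))
  · by_cases h : i' = i
    · subst h
      simp only [decompFn, dif_pos, hweight, hmoment, inv_smul_smul₀ ht]
    · simp [decompFn, compFn, h]
  · by_cases h : i' = i
    · subst h
      simp only [decompFn, dif_pos, hweight]
    · simp [decompFn, compFn, h]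
  · simp only [decompFn, hweight, hmoment, inv_smul_smul₀ ht]
    simp [compFn, inv_smul_smul₀ ht]
  · simp only [decompFn, hweight]
    exact mul_div_cancel_left₀ _ ht

lemma compFn_mem_RVset [Fintype I] [Fintype J] {p : ((I → V) × (I → ℝ)) × ((J → V) × (J → ℝ))}
    (hp : p ∈ RVset V I ×ˢ RVset V J) : compFn i p ∈ RVset V ({i' : I // i' ≠ i} ⊕ J) := by
  obtain ⟨⟨x, t⟩, ⟨y, u⟩⟩ := p
  obtain ⟨⟨ht, htsum, hxbar⟩, hu, husum, hybar⟩ := hp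
  refine ⟨?_, ?_, ?_⟩
  · rintro (i' | j)
    · exact ht _
    · exact mul_pos (ht i) (hu j)
  · rw [Fintype.sum_sum_type, sum_weight_compFn, ← htsum, Fintype.sum_eq_add_sum_subtype_ne _ i]
    simp only [husum, mul_one, add_comm]
    rfl
  · rw [Fintype.sum_sum_type, sum_moment_compFn, ← hxbar, Fintype.sum_eq_add_sum_subtype_ne _ i]
    simp only [husum, hybar, mul_one, smul_zero, add_zero, add_comm]
    rfl

lemma sum_weight_inr_pos [Fintype I] [Fintype J] [Nonempty J]
    {q : (({i' : I // i' ≠ i} ⊕ J) → V) × (({i' : I // i' ≠ i} ⊕ J) → ℝ)}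
    (hq : q ∈ RVset V ({i' : I // i' ≠ i} ⊕ J)) : 0 < ∑ j, q.2 (.inr j) :=
  sum_pos (fun _ _ => hq.1 _) univ_nonempty

lemma decompFn_fst_mem_RVset [Fintype I] [Fintype J] [Nonempty J]
    {q : (({i' : I // i' ≠ i} ⊕ J) → V) × (({i' : I // i' ≠ i} ⊕ J) → ℝ)}
    (hq : q ∈ RVset V ({i' : I // i' ≠ i} ⊕ J)) : (decompFn i q).1 ∈ RVset V I := by
  have hT := sum_weight_inr_pos hq
  obtain ⟨hpos, hsum, hbar⟩ := hq
  refine ⟨fun i' => ?_, ?_, ?_⟩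
  · by_cases h : i' = i
    · subst h
      exact (decompFn_weight_self q).symm ▸ hT
    · exact (decompFn_of_ne q ⟨i', h⟩).2 ▸ hpos _
  · rw [Fintype.sum_eq_add_sum_subtype_ne _ i, decompFn_weight_self, ← hsum,
      Fintype.sum_sum_type, add_comm]
    simp only [decompFn_of_ne]
  · rw [Fintype.sum_eq_add_sum_subtype_ne _ i, decompFn_moment_self q hT.ne', ← hbar,
      Fintype.sum_sum_type, add_comm]
    simp only [decompFn_of_ne]

lemma decompFn_snd_mem_RVset [Fintype I] [Fintype J] [Nonempty J]
    {q : (({i' : I // i' ≠ i} ⊕ J) → V) × (({i' : I // i' ≠ i} ⊕ J) → ℝ)}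
    (hq : q ∈ RVset V ({i' : I // i' ≠ i} ⊕ J)) : (decompFn i q).2 ∈ RVset V J := by
  have hT := sum_weight_inr_pos hq
  refine ⟨fun j => div_pos (hq.1 _) hT, ?_, ?_⟩
  · simp only [decompFn, ← sum_div, div_self hT.ne']
  · set T := ∑ j, q.2 (.inr j)
    set c := T⁻¹ • ∑ j, q.2 (.inr j) • q.1 (.inr j)
    calc ∑ j, (q.2 (.inr j) / T) • T⁻¹ • (q.1 (.inr j) - c)
        = (T⁻¹ * T⁻¹) • ∑ j, q.2 (.inr j) • (q.1 (.inr j) - c) := by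
          rw [smul_sum]
          refine sum_congr rfl fun j _ => ?_
          rw [smul_smul, smul_smul, div_eq_mul_inv]
          ring_nf
      _ = 0 := by rw [sum_smul_sub_barycentre_eq_zero _ _ hT.ne', smul_zero]

end

theorem stmt_2_general {V : Type*} [AddCommGroup V] [Module ℝ V]
    {I J : Type*} [Fintype I] [Fintype J] [DecidableEq I] [Nonempty J]
    (i : I) :
    (∀ q ∈ RVset V ({i' : I // i' ≠ i} ⊕ J), compFn i (decompFn i q) = q) ∧
    (∀ p ∈ (RVset V I) ×ˢ (RVset V J), decompFn i (compFn i p) = p) ∧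
    Set.BijOn (compFn i) ((RVset V I) ×ˢ (RVset V J))
      (RVset V ({i' : I // i' ≠ i} ⊕ J)) := by
  have hright : ∀ q ∈ RVset V ({i' : I // i' ≠ i} ⊕ J), compFn i (decompFn i q) = q :=
    fun q hq => compFn_decompFn q (sum_weight_inr_pos hq).ne'
  have hleft : ∀ p ∈ (RVset V I) ×ˢ (RVset V J), decompFn i (compFn i p) = p := by
    rintro ⟨⟨x, t⟩, ⟨y, u⟩⟩ ⟨⟨ht, -, -⟩, -, hu, hy⟩
    exact decompFn_compFn x t y u (ht i).ne' hu hy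
  refine ⟨hright, hleft, Set.InvOn.bijOn ⟨hleft, hright⟩ (fun p hp => compFn_mem_RVset hp) ?_⟩
  exact fun q hq => ⟨decompFn_fst_mem_RVset hq, decompFn_snd_mem_RVset hq⟩

/-- Composing the decomposition recovers the original point of `R_V(I ∪_i J)`;
decomposing a composition recovers the original pair; hence the composition map
`R_V(I) × R_V(J) → R_V(I ∪_i J)` is a bijection. -/
theorem stmt_2 {V : Type*} [AddCommGroup V] [Module ℝ V]
    {I J : Type*} [Fintype I] [Fintype J] [DecidableEq I] [Nonempty I] [Nonempty J]
    (i : I) :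
    (∀ q ∈ RVset V ({i' : I // i' ≠ i} ⊕ J), compFn i (decompFn i q) = q) ∧
    (∀ p ∈ (RVset V I) ×ˢ (RVset V J), decompFn i (compFn i p) = p) ∧
    Set.BijOn (compFn i) ((RVset V I) ×ˢ (RVset V J))
      (RVset V ({i' : I // i' ≠ i} ⊕ J)) :=
  stmt_2_general i
end

section
/- Let V be a finite-dimensional real normed vector space, I a finite set, x : I → V, t : I → (0,∞), and let π be the partition of I generated by the relation identifying i and j whenever |x_i − x_j| ≤ t_i + t_j. Then for every i ∈ I, writing [i] for the block of π containing i, t_L = ∑_{l∈L} t_l and x_L = (∑_{l∈L} t_l x_l)/t_L, one has |x_i − x_{[i]}| ≤ t_{[i]} − t_i. -/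
/-!
Grow the block `[i]` from `{i}` one element at a time, each time adding some `j` linked to an
element `k` already present. The inequality `‖x a - x_S‖ ≤ t_S - t a` for all `a ∈ S` survives
such a step: the new barycentre is the convex combination
`(t j + t_S)⁻¹ • (t j • x j + t_S • x_S)`, and going through `k` gives `‖x j - x_S‖ ≤ t j + t_S`.
-/

open Finset Relation

section EqvGenClass

variable {I : Type*} {r : I → I → Prop}

lemma Relation.EqvGen.mem_iff_mem_of_forall_rel {T : Finset I}
    (hT : ∀ a b, r a b → (a ∈ T ↔ b ∈ T)) {a b : I} (hab : EqvGen r a b) : a ∈ T ↔ b ∈ T := by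
  induction hab with
  | rel a b h => exact hT a b h
  | refl => rfl
  | symm _ _ _ ih => exact ih.symm
  | trans _ _ _ _ _ ih₁ ih₂ => exact ih₁.trans ih₂

theorem induction_on_eqvGen_class [DecidableEq I] [Std.Symm r] {i : I} {C : Finset I}
    (hC : ∀ b, b ∈ C ↔ EqvGen r i b) {p : Finset I → Prop} (single : p {i})
    (step : ∀ T j k, p T → k ∈ T → j ∉ T → r j k → p (insert j T)) : p C := by
  classical
  obtain ⟨T, ⟨hTC, hiT, hpT⟩, hmax⟩ :
      ∃ T, Maximal (fun T => T ⊆ C ∧ i ∈ T ∧ p T) T := by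
    obtain ⟨T, hT⟩ := (C.powerset.filter fun T => i ∈ T ∧ p T).exists_maximal
      ⟨{i}, by simp [(hC i).2 (EqvGen.refl i), single]⟩
    exact ⟨T, by simpa using hT⟩
  have hclosed : ∀ k j, r k j → k ∈ T → j ∈ T := by
    intro k j hkj hk
    by_contra hj
    have hjC : j ∈ C := (hC j).2 <| ((hC k).1 (hTC hk)).trans _ _ _ (EqvGen.rel _ _ hkj)
    have hgrow : insert j T ⊆ C ∧ i ∈ insert j T ∧ p (insert j T) :=
      ⟨insert_subset hjC hTC, mem_insert_of_mem hiT, step T j k hpT hk hj (symm hkj)⟩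
    exact hj <| hmax hgrow (subset_insert j T) (mem_insert_self j T)
  have hCT : C ⊆ T := fun b hb =>
    (((hC b).1 hb).mem_iff_mem_of_forall_rel
      fun k j h => ⟨hclosed k j h, hclosed j k (symm h)⟩).1 hiT
  rwa [← subset_antisymm hTC hCT]

end EqvGenClass

section Barycentre

variable {V : Type*} [NormedAddCommGroup V] [NormedSpace ℝ V]

lemma norm_sub_weightedMean_le (v p q : V) {α β : ℝ} (hα : 0 ≤ α) (hβ : 0 ≤ β)
    (hαβ : 0 < α + β) :
    ‖v - (α + β)⁻¹ • (α • p + β • q)‖ ≤ (α + β)⁻¹ * (α * ‖v - p‖ + β * ‖v - q‖) := by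
  have hv : v - (α + β)⁻¹ • (α • p + β • q) = (α + β)⁻¹ • (α • (v - p) + β • (v - q)) := by
    conv_lhs => rw [← inv_smul_smul₀ hαβ.ne' v]
    module
  rw [hv, norm_smul, Real.norm_of_nonneg (inv_nonneg.2 hαβ.le)]
  gcongr
  refine (norm_add_le _ _).trans_eq ?_
  rw [norm_smul, norm_smul, Real.norm_of_nonneg hα, Real.norm_of_nonneg hβ]

variable {I : Type*} (x : I → V) (t : I → ℝ)

noncomputable def barycentre (S : Finset I) : V := (∑ l ∈ S, t l)⁻¹ • ∑ l ∈ S, t l • x l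

lemma barycentre_insert [DecidableEq I] {S : Finset I} {j : I} (hj : j ∉ S)
    (hS : ∑ l ∈ S, t l ≠ 0) :
    barycentre x t (insert j S) =
      (t j + ∑ l ∈ S, t l)⁻¹ • (t j • x j + (∑ l ∈ S, t l) • barycentre x t S) := by
  rw [barycentre, barycentre, sum_insert hj, sum_insert hj, smul_inv_smul₀ hS]

def BarycentreBound (S : Finset I) : Prop :=
  ∀ a ∈ S, ‖x a - barycentre x t S‖ ≤ ∑ l ∈ S, t l - t a

variable {x t}

lemma barycentreBound_singleton {j : I} (hj : t j ≠ 0) : BarycentreBound x t {j} := by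
  simp [BarycentreBound, barycentre, inv_smul_smul₀ hj]

lemma BarycentreBound.insert [DecidableEq I] (ht : ∀ k, 0 < t k) {S : Finset I} {j k : I}
    (hS : BarycentreBound x t S) (hk : k ∈ S) (hj : j ∉ S) (hjk : ‖x j - x k‖ ≤ t j + t k) :
    BarycentreBound x t (insert j S) := by
  set s := ∑ l ∈ S, t l
  set b := barycentre x t S
  have hs : 0 < s := sum_pos (fun l _ => ht l) ⟨k, hk⟩
  have hjs : 0 < t j + s := add_pos (ht j) hs
  have hjb : ‖x j - b‖ ≤ t j + s := calc
    ‖x j - b‖ ≤ ‖x j - x k‖ + ‖x k - b‖ := norm_sub_le_norm_sub_add_norm_sub _ _ _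
    _ ≤ (t j + t k) + (s - t k) := add_le_add hjk (hS k hk)
    _ = t j + s := by ring
  intro a ha
  rw [barycentre_insert x t hj hs.ne', sum_insert hj]
  refine (norm_sub_weightedMean_le (x a) (x j) b (ht j).le hs.le hjs).trans ?_
  rw [inv_mul_le_iff₀ hjs]
  rcases mem_insert.1 ha with rfl | haS
  · have := mul_le_mul_of_nonneg_left hjb hs.le
    simp only [sub_self, norm_zero, mul_zero, zero_add]
    linarith
  · have hab := hS a haS
    have haj : ‖x a - x j‖ ≤ (s - t a) + (t j + s) :=
      (norm_sub_le_norm_sub_add_norm_sub _ b _).trans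
        (add_le_add hab (by rwa [norm_sub_rev]))
    linarith [mul_le_mul_of_nonneg_left haj (ht j).le, mul_le_mul_of_nonneg_left hab hs.le]

end Barycentre

theorem stmt_6_general {V : Type*} [NormedAddCommGroup V] [NormedSpace ℝ V]
    {I : Type*}
    (x : I → V) (t : I → ℝ) (ht : ∀ k, 0 < t k)
    (B : I → Finset I)
    (hB : ∀ a b, b ∈ B a ↔ Relation.EqvGen (fun a b => ‖x a - x b‖ ≤ t a + t b) a b)
    (i : I) :
    ‖x i - (∑ l ∈ B i, t l)⁻¹ • ∑ l ∈ B i, t l • x l‖ ≤ (∑ l ∈ B i, t l) - t i := by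
  classical
  have : Std.Symm fun a b => ‖x a - x b‖ ≤ t a + t b :=
    ⟨fun a b h => by rwa [norm_sub_rev, add_comm]⟩
  have hbound : BarycentreBound x t (B i) :=
    induction_on_eqvGen_class (hB i) (barycentreBound_singleton (ht i).ne')
      fun _ _ _ hS hk hj hjk => hS.insert ht hk hj hjk
  exact hbound i ((hB i i).2 (EqvGen.refl i))

/-- Lemma (lem:part): if `B i` is the block containing `i` of the partition of `I`
generated by the relation `i ~ j ↔ ‖x i - x j‖ ≤ t i + t j`, then
`‖x i - x_{B i}‖ ≤ t_{B i} - t i`, where `x_L` denotes the weighted barycentre and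
`t_L` the combined weight of a block `L`. -/
theorem stmt_6 {V : Type*} [NormedAddCommGroup V] [NormedSpace ℝ V]
    {I : Type*} [Fintype I]
    (x : I → V) (t : I → ℝ) (ht : ∀ k, 0 < t k)
    (B : I → Finset I)
    (hB : ∀ a b, b ∈ B a ↔ Relation.EqvGen (fun a b => ‖x a - x b‖ ≤ t a + t b) a b)
    (i : I) :
    ‖x i - (∑ l ∈ B i, t l)⁻¹ • ∑ l ∈ B i, t l • x l‖ ≤ (∑ l ∈ B i, t l) - t i :=
  stmt_6_general x t ht B hB i
end

section
/- Let V be a finite-dimensional real normed vector space, I a finite set, x : I → V, t : I → (0,∞) with ∑ t_i = 1 and ∑ t_i x_i = 0. If the partition of I generated by i ~ j whenever |x_i − x_j| ≤ t_i + t_j is the indiscrete partition {I}, then max_{i∈I}(|x_i| + t_i) ≤ 1. -/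
/-!
Two touching discs `i, j` (`‖x i - x j‖ ≤ t i + t j`) both lie in the disc of radius
`t i + t j` centred at their weighted barycentre. Replacing the two by this disc preserves the
total weight and the barycentre, every old disc lies in the disc replacing it, and a disc that
touched one of the two touches the new one, so the configuration stays connected. Merging until
one disc is left gives the disc of radius `∑ t` around the barycentre, which contains all the
original discs.
-/

open Finset Function

theorem Relation.EqvGen.exists_rel_of_ne {α : Type*} {r : α → α → Prop} {a b : α}
    (h : Relation.EqvGen r a b) (hab : a ≠ b) : ∃ u v, u ≠ v ∧ r u v := by
  induction h with
  | rel u v huv => exact ⟨u, v, hab, huv⟩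
  | refl => exact absurd rfl hab
  | symm u v _ ih => exact ih hab.symm
  | trans u v w _ _ ih₁ ih₂ =>
    by_cases huv : u = v
    · exact ih₂ (huv ▸ hab)
    · exact ih₁ huv

theorem Relation.EqvGen.map {α β : Type*} {r : α → α → Prop} {s : β → β → Prop} (f : α → β)
    (hf : ∀ a b, r a b → s (f a) (f b)) {a b : α} (h : Relation.EqvGen r a b) :
    Relation.EqvGen s (f a) (f b) := by
  induction h with
  | rel u v huv => exact .rel _ _ (hf u v huv)
  | refl => exact .refl _
  | symm _ _ _ ih => exact .symm _ _ ih
  | trans _ _ _ _ _ ih₁ ih₂ => exact .trans _ _ _ ih₁ ih₂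

theorem Fintype.sum_subtype_ne_update_add {ι M : Type*} [Fintype ι] [DecidableEq ι]
    [AddCommMonoid M] {i j : ι} (hij : i ≠ j) (f : ι → M) :
    ∑ k : {k // k ≠ j}, update f i (f i + f j) k = ∑ k, f k := by
  have hi : (⟨i, hij⟩ : {k // k ≠ j}) ∈ univ := mem_univ _
  have hupdate : (fun k : {k // k ≠ j} => update f i (f i + f j) k)
      = update (fun k : {k // k ≠ j} => f k) ⟨i, hij⟩ (f i + f j) :=
    update_comp_eq_of_injective f Subtype.val_injective (⟨i, hij⟩ : {k // k ≠ j}) (f i + f j)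
  rw [hupdate, sum_update_of_mem hi, Fintype.sum_eq_add_sum_subtype_ne f j,
    sum_eq_add_sum_sdiff_singleton_of_mem hi]
  abel

theorem norm_sub_le_add_of_norm_sub_add_le {E : Type*} [SeminormedAddCommGroup E]
    {u v u' v' : E} {r s r' s' : ℝ} (hu : ‖u - u'‖ + r ≤ r') (hv : ‖v - v'‖ + s ≤ s')
    (h : ‖u - v‖ ≤ r + s) : ‖u' - v'‖ ≤ r' + s' := by
  rw [← dist_eq_norm] at *
  linarith [dist_triangle4 u' u v v', dist_comm u u']

section Merge

variable {V : Type*} [NormedAddCommGroup V] [NormedSpace ℝ V]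

theorem norm_sub_lineMap_div_add_le_left {u v : V} {a b : ℝ} (ha : 0 < a) (hb : 0 < b)
    (h : ‖u - v‖ ≤ a + b) : ‖u - AffineMap.lineMap u v (b / (a + b))‖ ≤ b := by
  rw [← dist_eq_norm, dist_comm, dist_lineMap_left, Real.norm_of_nonneg (by positivity),
    dist_eq_norm]
  calc b / (a + b) * ‖u - v‖ ≤ b / (a + b) * (a + b) := by gcongr
    _ = b := div_mul_cancel₀ b (by positivity)

theorem norm_sub_lineMap_div_add_le_right {u v : V} {a b : ℝ} (ha : 0 < a) (hb : 0 < b)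
    (h : ‖u - v‖ ≤ a + b) : ‖v - AffineMap.lineMap u v (b / (a + b))‖ ≤ a := by
  have hab : b / (a + b) = 1 - a / (b + a) := by field_simp; ring
  rw [hab, AffineMap.lineMap_apply_one_sub]
  exact norm_sub_lineMap_div_add_le_left (u := v) hb ha (by rwa [norm_sub_rev, add_comm])

theorem add_smul_lineMap_div_add {u v : V} {a b : ℝ} (hab : a + b ≠ 0) :
    (a + b) • AffineMap.lineMap u v (b / (a + b)) = a • u + b • v := by
  rw [AffineMap.lineMap_apply_module]
  match_scalars
  · field_simp; ring
  · field_simp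

variable {I : Type*}

def Touch (x : I → V) (t : I → ℝ) (a b : I) : Prop :=
  ‖x a - x b‖ ≤ t a + t b

variable [DecidableEq I] {i j : I}

noncomputable def mergeCentres (x : I → V) (t : I → ℝ) (i j : I) (k : {k // k ≠ j}) : V :=
  update x i (AffineMap.lineMap (x i) (x j) (t j / (t i + t j))) k

def mergeWeights (t : I → ℝ) (i j : I) (k : {k // k ≠ j}) : ℝ :=
  update t i (t i + t j) k

def mergeProj (hij : i ≠ j) (a : I) : {k // k ≠ j} :=
  if h : a = j then ⟨i, hij⟩ else ⟨a, h⟩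

theorem mergeProj_val (hij : i ≠ j) (k : {k // k ≠ j}) : mergeProj hij k = k :=
  dif_neg k.2

theorem mergeWeights_pos {t : I → ℝ} (ht : ∀ k, 0 < t k) (k : {k // k ≠ j}) :
    0 < mergeWeights t i j k := by
  unfold mergeWeights
  rcases eq_or_ne (k : I) i with hk | hk
  · rw [hk, update_self]; linarith [ht i, ht j]
  · rw [update_of_ne hk]; exact ht k

theorem norm_sub_mergeCentres_mergeProj_add_le (hij : i ≠ j) {x : I → V} {t : I → ℝ}
    (ht : ∀ k, 0 < t k) (htouch : Touch x t i j) (a : I) :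
    ‖x a - mergeCentres x t i j (mergeProj hij a)‖ + t a
      ≤ mergeWeights t i j (mergeProj hij a) := by
  have hi := norm_sub_lineMap_div_add_le_left (ht i) (ht j) htouch
  have hj := norm_sub_lineMap_div_add_le_right (ht i) (ht j) htouch
  unfold mergeProj mergeCentres mergeWeights
  rcases eq_or_ne a j with rfl | haj
  · simp only [dif_pos, update_self]
    linarith
  · rcases eq_or_ne a i with rfl | hai
    · simp only [dif_neg haj, update_self]
      linarith
    · simp [dif_neg haj, update_of_ne hai]

theorem eqvGen_touch_merge (hij : i ≠ j) {x : I → V} {t : I → ℝ} (ht : ∀ k, 0 < t k)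
    (htouch : Touch x t i j) (hconn : ∀ a b, Relation.EqvGen (Touch x t) a b)
    (k l : {k // k ≠ j}) :
    Relation.EqvGen (Touch (mergeCentres x t i j) (mergeWeights t i j)) k l := by
  have hcont := norm_sub_mergeCentres_mergeProj_add_le hij ht htouch
  rw [← mergeProj_val hij k, ← mergeProj_val hij l]
  exact (hconn k l).map (mergeProj hij) fun a b hab =>
    norm_sub_le_add_of_norm_sub_add_le (hcont a) (hcont b) hab

variable [Fintype I]

theorem sum_mergeWeights (hij : i ≠ j) (t : I → ℝ) :
    ∑ k, mergeWeights t i j k = ∑ k, t k :=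
  Fintype.sum_subtype_ne_update_add hij t

theorem sum_mergeWeights_smul_mergeCentres (hij : i ≠ j) (x : I → V) {t : I → ℝ}
    (ht : t i + t j ≠ 0) :
    ∑ k, mergeWeights t i j k • mergeCentres x t i j k = ∑ k, t k • x k := by
  have hsmul : ∀ k : {k // k ≠ j}, mergeWeights t i j k • mergeCentres x t i j k
      = update (fun k => t k • x k) i (t i • x i + t j • x j) k := by
    intro k
    unfold mergeWeights mergeCentres
    rcases eq_or_ne (k : I) i with hk | hk
    · simp only [hk, update_self, add_smul_lineMap_div_add ht]
    · simp only [update_of_ne hk]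
  simp only [hsmul]
  exact Fintype.sum_subtype_ne_update_add hij fun k => t k • x k

end Merge

theorem norm_sub_add_le_sum_of_eqvGen_touch {V : Type*} [NormedAddCommGroup V]
    [NormedSpace ℝ V] {I : Type*} [Fintype I] {x : I → V} {t : I → ℝ} (ht : ∀ k, 0 < t k)
    {c : V} (hbar : ∑ k, t k • x k = (∑ k, t k) • c)
    (hconn : ∀ a b, Relation.EqvGen (Touch x t) a b) (i : I) :
    ‖x i - c‖ + t i ≤ ∑ k, t k := by
  induction hn : Fintype.card I using Nat.strong_induction_on generalizing I with
  | _ n ih =>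
    rcases subsingleton_or_nontrivial I with hI | hI
    · have hsum : ∑ k, t k = t i := Fintype.sum_subsingleton t i
      have hxi : x i = c := by
        rw [hsum, Fintype.sum_subsingleton _ i] at hbar
        exact smul_right_injective V (ht i).ne' hbar
      rw [hsum, hxi, sub_self, norm_zero, zero_add]
    · classical
      obtain ⟨a, b, hab⟩ := exists_pair_ne I
      obtain ⟨u, v, huv, htouch⟩ := (hconn a b).exists_rel_of_ne hab
      have hcard : Fintype.card {k // k ≠ v} < n :=
        hn ▸ Fintype.card_subtype_lt (not_not.2 rfl)
      have hbar' : ∑ k, mergeWeights t u v k • mergeCentres x t u v k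
          = (∑ k, mergeWeights t u v k) • c := by
        rw [sum_mergeWeights_smul_mergeCentres huv x (by linarith [ht u, ht v]),
          sum_mergeWeights huv, hbar]
      have hmerged := ih _ hcard (mergeWeights_pos ht) hbar'
        (eqvGen_touch_merge huv ht htouch hconn) (mergeProj huv i) rfl
      rw [sum_mergeWeights huv] at hmerged
      linarith [norm_sub_mergeCentres_mergeProj_add_le huv ht htouch i,
        norm_sub_le_norm_sub_add_norm_sub (x i) (mergeCentres x t u v (mergeProj huv i)) c]

/-- Final claim of Lemma (lem:part): if the partition generated by
`i ~ j ↔ ‖x i - x j‖ ≤ t i + t j` is indiscrete (all elements related), the weights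
sum to `1` and the weighted barycentre is `0`, then `‖x i‖ + t i ≤ 1` for every `i`,
i.e. `max_i (‖x i‖ + t i) ≤ 1`. -/
theorem stmt_7 {V : Type*} [NormedAddCommGroup V] [NormedSpace ℝ V]
    {I : Type*} [Fintype I]
    (x : I → V) (t : I → ℝ) (ht : ∀ k, 0 < t k)
    (hsum : ∑ k, t k = 1) (hbar : ∑ k, t k • x k = 0)
    (hconn : ∀ i j : I, Relation.EqvGen (fun a b => ‖x a - x b‖ ≤ t a + t b) i j) :
    ∀ i, ‖x i‖ + t i ≤ 1 := by
  intro i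
  simpa only [sub_zero, hsum] using
    norm_sub_add_le_sum_of_eqvGen_touch ht (c := 0) (by rw [hbar, smul_zero]) hconn i
end

section
/- Let V be a finite-dimensional real normed vector space, I a finite set, and (x,t) with x : I → V, t : I → (0,∞) satisfying |x_i| < t_i for all i and |x_i − x_j| < min(t_i, t_j) for all i, j ∈ I. Then for any two disjoint nonempty subsets K, K' ⊆ I, writing t_K = ∑_{k∈K} t_k and x_K = (∑_{k∈K} t_k x_k)/t_K, one has |x_K| < t_K and |x_K − x_{K'}| < min(t_K, t_{K'}). -/
/-!
Both barycentres are centres of mass with positive weights, and open balls are convex, so a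
centre of mass of points of a ball stays in it. Each `x k` with `k ∈ K` lies in the ball of
radius `t k ≤ t_K` about the origin; and every `x k` lies within `min t_K t_K'` of every
`x k'` with `k' ∈ K'`, so averaging first over `K'` and then over `K` keeps that bound.
-/

open Finset Metric

section

variable {ι V : Type*} [NormedAddCommGroup V] [NormedSpace ℝ V]

theorem Finset.centerMass_mem_ball {s : Finset ι} {w : ι → ℝ} {z : ι → V} {c : V} {r : ℝ}
    (hw : ∀ i ∈ s, 0 < w i) (hs : s.Nonempty) (hz : ∀ i ∈ s, z i ∈ ball c r) :
    s.centerMass w z ∈ ball c r :=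
  (convex_ball c r).centerMass_mem (fun i hi => (hw i hi).le) (sum_pos hw hs) hz

theorem Finset.norm_centerMass_lt_sum {s : Finset ι} {t : ι → ℝ} {x : ι → V}
    (ht : ∀ k ∈ s, 0 < t k) (hs : s.Nonempty) (hx : ∀ k ∈ s, ‖x k‖ < t k) :
    ‖s.centerMass t x‖ < ∑ k ∈ s, t k := by
  rw [← mem_ball_zero_iff]
  refine centerMass_mem_ball ht hs fun k hk => mem_ball_zero_iff.2 ?_
  exact (hx k hk).trans_le (single_le_sum (fun i hi => (ht i hi).le) hk)

theorem Finset.dist_centerMass_centerMass_lt {s s' : Finset ι} {w : ι → ℝ} {x : ι → V}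
    {r : ℝ} (hw : ∀ k ∈ s, 0 < w k) (hw' : ∀ k ∈ s', 0 < w k)
    (hs : s.Nonempty) (hs' : s'.Nonempty)
    (hx : ∀ k ∈ s, ∀ k' ∈ s', dist (x k) (x k') < r) :
    dist (s.centerMass w x) (s'.centerMass w x) < r := by
  have hnear : ∀ k ∈ s, x k ∈ ball (s'.centerMass w x) r := fun k hk =>
    mem_ball_comm.1 <| centerMass_mem_ball hw' hs' fun k' hk' => mem_ball_comm.1 (hx k hk k' hk')
  exact centerMass_mem_ball hw hs hnear

end

theorem stmt_8_general {V : Type*} [NormedAddCommGroup V] [NormedSpace ℝ V]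
    {I : Type*}
    (x : I → V) (t : I → ℝ) (ht : ∀ k, 0 < t k)
    (h1 : ∀ i, ‖x i‖ < t i)
    (h2 : ∀ i j, ‖x i - x j‖ < min (t i) (t j))
    (K K' : Finset I) (hK : K.Nonempty) (hK' : K'.Nonempty) :
    ‖(∑ k ∈ K, t k)⁻¹ • ∑ k ∈ K, t k • x k‖ < ∑ k ∈ K, t k ∧
    ‖(∑ k ∈ K, t k)⁻¹ • (∑ k ∈ K, t k • x k)
        - (∑ k ∈ K', t k)⁻¹ • ∑ k ∈ K', t k • x k‖
      < min (∑ k ∈ K, t k) (∑ k ∈ K', t k) := by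
  have hle : ∀ s : Finset I, ∀ k ∈ s, t k ≤ ∑ i ∈ s, t i := fun s k hk =>
    single_le_sum (fun i _ => (ht i).le) hk
  refine ⟨norm_centerMass_lt_sum (fun k _ => ht k) hK fun k _ => h1 k, ?_⟩
  rw [← dist_eq_norm]
  refine dist_centerMass_centerMass_lt (fun k _ => ht k) (fun k _ => ht k) hK hK'
    fun k hk k' hk' => ?_
  rw [dist_eq_norm]
  exact (h2 k k').trans_le (min_le_min (hle K k hk) (hle K' k' hk'))

/-- Lemma (lem:barS): if each disc's interior contains the origin (`‖x i‖ < t i`) and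
the centre of every other disc (`‖x i - x j‖ < min (t i) (t j)`), then the same
inequalities hold for the weighted barycentres of disjoint nonempty subsets. -/
theorem stmt_8 {V : Type*} [NormedAddCommGroup V] [NormedSpace ℝ V]
    {I : Type*} [Fintype I]
    (x : I → V) (t : I → ℝ) (ht : ∀ k, 0 < t k)
    (h1 : ∀ i, ‖x i‖ < t i)
    (h2 : ∀ i j, ‖x i - x j‖ < min (t i) (t j))
    (K K' : Finset I) (hK : K.Nonempty) (hK' : K'.Nonempty) (hd : Disjoint K K') :
    ‖(∑ k ∈ K, t k)⁻¹ • ∑ k ∈ K, t k • x k‖ < ∑ k ∈ K, t k ∧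
    ‖(∑ k ∈ K, t k)⁻¹ • (∑ k ∈ K, t k • x k)
        - (∑ k ∈ K', t k)⁻¹ • ∑ k ∈ K', t k • x k‖
      < min (∑ k ∈ K, t k) (∑ k ∈ K', t k) :=
  stmt_8_general x t ht h1 h2 K K' hK hK'
end

section
/- Let V be a finite-dimensional real normed vector space, I∪_i J = (I∖{i}) ⊔ J, and (x,t) with x : I∪_i J → V, t : I∪_i J → (0,∞), satisfying |x_k| < t_k for all k and |x_k − x_l| < min(t_k, t_l) for all k, l. Then the 'quotient' point (x/J, t/J) — given by (t/J)_{i'} = t_{i'}, (x/J)_{i'} = x_{i'} for i' ≠ i, and (t/J)_i = t_J, (x/J)_i = x_J — satisfies the same inequalities: |(x/J)_{i'}| < (t/J)_{i'} and |(x/J)_{i'} − (x/J)_{i''}| < min((t/J)_{i'}, (t/J)_{i''}) for all i', i'' ∈ I. -/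
/-!
The point `x_J` is the centre of mass of the points `x_j`, `j ∈ J`, with the positive weights
`t_j`, and `t_j ≤ t_J`. Every open ball is convex, so any bound `‖x_j - c‖ < r` holding for all
`j ∈ J` passes to `‖x_J - c‖ < r`; the inequalities for `(x/J, t/J)` involving the index `i`
follow from those for `(x, t)` with `c = 0` or `c = x_{i'}`, and the others are inherited.
-/

open Finset Metric

section CenterMass

variable {V : Type*} [NormedAddCommGroup V] [NormedSpace ℝ V] {J : Type*} [Fintype J] [Nonempty J]
  {s : J → ℝ} {y : J → V} {c : V} {r : ℝ}

lemma norm_centerMass_sub_lt (hs : ∀ j, 0 < s j) (h : ∀ j, ‖y j - c‖ < r) :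
    ‖univ.centerMass s y - c‖ < r := by
  rw [← dist_eq_norm, ← mem_ball]
  exact (convex_ball c r).centerMass_mem (fun j _ => (hs j).le)
    (sum_pos (fun j _ => hs j) univ_nonempty) fun j _ => by rw [mem_ball, dist_eq_norm]; exact h j

lemma norm_centerMass_sub_lt_min (hs : ∀ j, 0 < s j) (h : ∀ j, ‖y j - c‖ < min (s j) r) :
    ‖univ.centerMass s y - c‖ < min (∑ j, s j) r := by
  have hle j : s j ≤ ∑ j, s j := single_le_sum (fun j _ => (hs j).le) (mem_univ j)
  exact lt_min (norm_centerMass_sub_lt hs fun j => (h j).trans_le ((min_le_left _ _).trans (hle j)))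
    (norm_centerMass_sub_lt hs fun j => (h j).trans_le (min_le_right _ _))

end CenterMass

theorem stmt_9_general {V : Type*} [NormedAddCommGroup V] [NormedSpace ℝ V]
    {I J : Type*} [Fintype J] [Nonempty J]
    (i : I)
    (x : ({i' : I // i' ≠ i} ⊕ J) → V) (t : ({i' : I // i' ≠ i} ⊕ J) → ℝ)
    (h1 : ∀ k, ‖x k‖ < t k)
    (h2 : ∀ k l, ‖x k - x l‖ < min (t k) (t l))
    (tq : I → ℝ) (xq : I → V)
    (htq : ∀ (i') (h : i' ≠ i), tq i' = t (Sum.inl ⟨i', h⟩))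
    (htqi : tq i = ∑ j, t (Sum.inr j))
    (hxq : ∀ (i') (h : i' ≠ i), xq i' = x (Sum.inl ⟨i', h⟩))
    (hxqi : xq i = (∑ j, t (Sum.inr j))⁻¹ • ∑ j, t (Sum.inr j) • x (Sum.inr j)) :
    (∀ i', ‖xq i'‖ < tq i') ∧
    ∀ i' i'', ‖xq i' - xq i''‖ < min (tq i') (tq i'') := by
  have ht k : 0 < t k := (norm_nonneg _).trans_lt (h1 k)
  replace hxqi : xq i = univ.centerMass (t ∘ Sum.inr) (x ∘ Sum.inr) := hxqi
  have hle j : t (Sum.inr j) ≤ tq i := htqi ▸ single_le_sum (fun j _ => (ht _).le) (mem_univ j)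
  have hnorm_i : ‖xq i‖ < tq i := by
    have := norm_centerMass_sub_lt (s := t ∘ Sum.inr) (y := x ∘ Sum.inr) (c := 0)
      (fun j => ht _) fun j => by simpa using (h1 _).trans_le (hle j)
    rwa [sub_zero, ← hxqi] at this
  have hsub_i (i' : I) (h : i' ≠ i) : ‖xq i - xq i'‖ < min (tq i) (tq i') := by
    rw [hxqi, hxq i' h, htq i' h, htqi]
    exact norm_centerMass_sub_lt_min (fun j => ht _) fun j => h2 _ _
  refine ⟨fun i' => ?_, fun i' i'' => ?_⟩
  · by_cases h : i' = i
    · rw [h]; exact hnorm_i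
    · rw [hxq i' h, htq i' h]; exact h1 _
  · by_cases h' : i' = i <;> by_cases h'' : i'' = i
    · rw [h', h'', sub_self, norm_zero, min_self]; exact (norm_nonneg _).trans_lt hnorm_i
    · rw [h']; exact hsub_i i'' h''
    · rw [h'', norm_sub_rev, min_comm]; exact hsub_i i' h'
    · rw [hxq i' h', hxq i'' h'', htq i' h', htq i'' h'']; exact h2 _ _

/-- Proposition (prop:S-coop), quotient part: if `(x,t)`, indexed by the union
`I ∪_i J = {i' : I // i' ≠ i} ⊕ J`, satisfies the star-shaped inequalities
`‖x k‖ < t k` and `‖x k - x l‖ < min (t k) (t l)`, then the quotient point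
`(x/J, t/J)`, indexed by `I`, satisfies the same inequalities. -/
theorem stmt_9 {V : Type*} [NormedAddCommGroup V] [NormedSpace ℝ V]
    {I J : Type*} [Fintype I] [Fintype J] [DecidableEq I] [Nonempty J]
    (i : I)
    (x : ({i' : I // i' ≠ i} ⊕ J) → V) (t : ({i' : I // i' ≠ i} ⊕ J) → ℝ)
    (ht : ∀ k, 0 < t k)
    (h1 : ∀ k, ‖x k‖ < t k)
    (h2 : ∀ k l, ‖x k - x l‖ < min (t k) (t l))
    (tq : I → ℝ) (xq : I → V)
    (htq : ∀ (i') (h : i' ≠ i), tq i' = t (Sum.inl ⟨i', h⟩))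
    (htqi : tq i = ∑ j, t (Sum.inr j))
    (hxq : ∀ (i') (h : i' ≠ i), xq i' = x (Sum.inl ⟨i', h⟩))
    (hxqi : xq i = (∑ j, t (Sum.inr j))⁻¹ • ∑ j, t (Sum.inr j) • x (Sum.inr j)) :
    (∀ i', ‖xq i'‖ < tq i') ∧
    ∀ i' i'', ‖xq i' - xq i''‖ < min (tq i') (tq i'') :=
  stmt_9_general i x t h1 h2 tq xq htq htqi hxq hxqi
end

section
/- Let V be a finite-dimensional real normed vector space and (x,t) as above with |x_k| < t_k and |x_k − x_l| < min(t_k, t_l) for all k, l ∈ I∪_i J. Then the 'restriction' point (x|J, t|J), given by (t|J)_j = t_j/t_J and (x|J)_j = (x_j − x_J)/t_J for j ∈ J, satisfies |(x|J)_j| < (t|J)_j and |(x|J)_j − (x|J)_{j'}| < min((t|J)_j, (t|J)_{j'}) for all j, j' ∈ J. -/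
/-! The restricted point is `t_J⁻¹ • (x_j - x_J)`, where `x_J` is the centre of mass of the
`x_k`, `k ∈ J`, with weights `t_k`. All `x_k` lie in the open ball of radius `t_j` around `x_j`,
hence so does their centre of mass by convexity; and the differences of restricted points are
the original differences rescaled by `t_J⁻¹`. -/

open Finset

theorem Finset.norm_sub_centerMass_lt {V ι : Type*} [SeminormedAddCommGroup V] [NormedSpace ℝ V]
    {J : Finset ι} {w : ι → ℝ} {x : ι → V} {r : ℝ} (j : ι)
    (hw : ∀ k ∈ J, 0 ≤ w k) (hwJ : 0 < ∑ k ∈ J, w k) (hr : ∀ k ∈ J, ‖x j - x k‖ < r) :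
    ‖x j - J.centerMass w x‖ < r := by
  have hmem : J.centerMass w x ∈ Metric.ball (x j) r :=
    (convex_ball (x j) r).centerMass_mem hw hwJ fun k hk => by
      rw [Metric.mem_ball, dist_comm, dist_eq_norm]
      exact hr k hk
  rwa [Metric.mem_ball, dist_comm, dist_eq_norm] at hmem

theorem norm_inv_smul_lt_div {V : Type*} [SeminormedAddCommGroup V] [NormedSpace ℝ V]
    {c s : ℝ} {v : V} (hc : 0 < c) (hv : ‖v‖ < s) : ‖c⁻¹ • v‖ < s / c := by
  rw [norm_smul, norm_inv, Real.norm_of_nonneg hc.le, inv_mul_eq_div]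
  exact div_lt_div_of_pos_right hv hc

theorem stmt_10_general {V : Type*} [NormedAddCommGroup V] [NormedSpace ℝ V]
    {ι : Type*}
    (J : Finset ι) (hJ : J.Nonempty)
    (x : ι → V) (t : ι → ℝ) (ht : ∀ k, 0 < t k)
    (h2 : ∀ k l, ‖x k - x l‖ < min (t k) (t l)) :
    (∀ j ∈ J,
      ‖(∑ k ∈ J, t k)⁻¹ • (x j - (∑ k ∈ J, t k)⁻¹ • ∑ k ∈ J, t k • x k)‖
        < t j / ∑ k ∈ J, t k) ∧
    ∀ j ∈ J, ∀ j' ∈ J,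
      ‖(∑ k ∈ J, t k)⁻¹ • (x j - (∑ k ∈ J, t k)⁻¹ • ∑ k ∈ J, t k • x k)
          - (∑ k ∈ J, t k)⁻¹ • (x j' - (∑ k ∈ J, t k)⁻¹ • ∑ k ∈ J, t k • x k)‖
        < min (t j / ∑ k ∈ J, t k) (t j' / ∑ k ∈ J, t k) := by
  have hJpos : 0 < ∑ k ∈ J, t k := sum_pos (fun k _ => ht k) hJ
  refine ⟨fun j _ => ?_, fun j _ j' _ => ?_⟩
  · refine norm_inv_smul_lt_div hJpos (J.norm_sub_centerMass_lt j (fun k _ => (ht k).le) hJpos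
      fun k _ => ?_)
    exact (h2 j k).trans_le (min_le_left _ _)
  · rw [← smul_sub, sub_sub_sub_cancel_right, min_div_div_right hJpos.le]
    exact norm_inv_smul_lt_div hJpos (h2 j j')

/-- Proposition (prop:S-coop), restriction part: if `(x,t)` satisfies the star-shaped
inequalities, then the restriction point `(x|J, t|J)`, given by
`(t|J)_j = t j / t_J` and `(x|J)_j = t_J⁻¹ • (x j - x_J)`, satisfies them over `J`. -/
theorem stmt_10 {V : Type*} [NormedAddCommGroup V] [NormedSpace ℝ V]
    {ι : Type*} [Fintype ι]
    (J : Finset ι) (hJ : J.Nonempty)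
    (x : ι → V) (t : ι → ℝ) (ht : ∀ k, 0 < t k)
    (h1 : ∀ k, ‖x k‖ < t k)
    (h2 : ∀ k l, ‖x k - x l‖ < min (t k) (t l)) :
    (∀ j ∈ J,
      ‖(∑ k ∈ J, t k)⁻¹ • (x j - (∑ k ∈ J, t k)⁻¹ • ∑ k ∈ J, t k • x k)‖
        < t j / ∑ k ∈ J, t k) ∧
    ∀ j ∈ J, ∀ j' ∈ J,
      ‖(∑ k ∈ J, t k)⁻¹ • (x j - (∑ k ∈ J, t k)⁻¹ • ∑ k ∈ J, t k • x k)
          - (∑ k ∈ J, t k)⁻¹ • (x j' - (∑ k ∈ J, t k)⁻¹ • ∑ k ∈ J, t k • x k)‖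
        < min (t j / ∑ k ∈ J, t k) (t j' / ∑ k ∈ J, t k) :=
  stmt_10_general J hJ x t ht h2
end
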